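/- Let G be a uniquely hamiltonian graph containing a vertex v of degree 2 with neighbours a and b. Then the graph obtained from G by deleting v and adding two new vertices v' and v'' together with the edges v'a and v''b (so that v is split into two vertices of degree 1) is uniquely traceable. -/

import Mathlib

open SimpleGraph

/-- The set of edge sets of hamiltonian cycles of `G` (hamiltonian cycles are counted
as subgraphs, i.e. by their edge sets). -/
def hamCycleSets {V : Type*} (G : SimpleGraph V) : Set (Set (Sym2 V)) :=
  letI := Classical.decEq V
  {s | ∃ (v : V) (w : G.Walk v v), w.IsHamiltonianCycle ∧ {e | e ∈ w.edges} = s}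

/-- The number of hamiltonian cycles of `G`, counted as subgraphs. -/
noncomputable def hamCount {V : Type*} (G : SimpleGraph V) : ℕ := (hamCycleSets G).ncard

/-- The set of edge sets of cycles of length `k` in `G`. -/
def cycleSets {V : Type*} (G : SimpleGraph V) (k : ℕ) : Set (Set (Sym2 V)) :=
  {s | ∃ (v : V) (w : G.Walk v v), w.IsCycle ∧ w.length = k ∧ {e | e ∈ w.edges} = s}

/-- The number of cycles of length `k` in `G`, counted as subgraphs. -/
noncomputable def cycleCount {V : Type*} (G : SimpleGraph V) (k : ℕ) : ℕ := (cycleSets G k).ncard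

/-- The set of edge sets of hamiltonian paths of `G`. -/
def hamPathSets {V : Type*} (G : SimpleGraph V) : Set (Set (Sym2 V)) :=
  letI := Classical.decEq V
  {s | ∃ (u v : V) (w : G.Walk u v), w.IsHamiltonian ∧ {e | e ∈ w.edges} = s}

/-- The number of hamiltonian paths of `G`, counted as subgraphs. -/
noncomputable def hamPathCount {V : Type*} (G : SimpleGraph V) : ℕ := (hamPathSets G).ncard

/-- The degree of the vertex `v` in `G`. -/
noncomputable def vdeg {V : Type*} (G : SimpleGraph V) (v : V) : ℕ := (G.neighborSet v).ncard

/-- `G` contains a subdivision of `H`: there are branch vertices (an injective image of the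
vertices of `H`) joined by internally disjoint paths, one for each edge of `H`, whose internal
vertices avoid all branch vertices. -/
def ContainsSubdivision {V W : Type*} (G : SimpleGraph V) (H : SimpleGraph W) : Prop :=
  ∃ (f : W → V) (P : ∀ a b : W, H.Adj a b → G.Walk (f a) (f b)),
    Function.Injective f ∧
    (∀ a b (h : H.Adj a b), (P a b h).IsPath) ∧
    (∀ a b (h : H.Adj a b) (c : W), f c ∈ (P a b h).support → c = a ∨ c = b) ∧
    (∀ a b (h : H.Adj a b) (c d : W) (h' : H.Adj c d), s(a, b) ≠ s(c, d) →
      ∀ v, v ∈ (P a b h).support → v ∈ (P c d h').support →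
        (v = f a ∨ v = f b) ∧ (v = f c ∨ v = f d))

/-- A graph is planar iff (by Kuratowski's theorem) it contains no subdivision of `K₅`
nor of `K₃,₃`. -/
def PlanarGraph {V : Type*} (G : SimpleGraph V) : Prop :=
  ¬ ContainsSubdivision G (completeGraph (Fin 5)) ∧
  ¬ ContainsSubdivision G (completeBipartiteGraph (Fin 3) (Fin 3))

/-- The graph obtained from `G` by deleting the vertex `v` and adding two new vertices
`Sum.inr false` and `Sum.inr true` joined to `a` and `b`, respectively (splitting `v` into
two vertices of degree `1`). -/
def splitVertex {V : Type*} (G : SimpleGraph V) (v a b : V) :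
    SimpleGraph ({x : V // x ≠ v} ⊕ Bool) :=
  SimpleGraph.fromRel (fun x y =>
    match x, y with
    | Sum.inl p, Sum.inl q => G.Adj p q
    | Sum.inl p, Sum.inr i => (i = false ∧ (p : V) = a) ∨ (i = true ∧ (p : V) = b)
    | _, _ => False)

/-!
Gluing the two new vertices back into `v` is a graph homomorphism `splitVertex G v a b →g G`.
The two pendant vertices must be the ends of every hamiltonian path of the split graph, so such
a path glues to a hamiltonian cycle of `G`; conversely, every hamiltonian cycle of `G` runs
`a ⋯ b` through `G - v` and then through `v`, and cutting it at `v` gives a hamiltonian path of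
the split graph. Since `a ≠ b`, gluing is injective on edges, so distinct hamiltonian paths
would glue to distinct hamiltonian cycles.
-/

namespace SimpleGraph.Walk

variable {V : Type*} {G : SimpleGraph V}

theorem IsPath.eq_or_eq_of_subsingleton_neighborSet {u w t : V} {p : G.Walk u w}
    (hp : p.IsPath) (ht : t ∈ p.support) (hN : (G.neighborSet t).Subsingleton) :
    t = u ∨ t = w := by
  obtain ⟨i, rfl, hi⟩ := mem_support_iff_exists_getVert.1 ht
  by_contra! h
  have hi0 : i ≠ 0 := by rintro rfl; exact h.1 p.getVert_zero
  have hil : i < p.length := hi.lt_of_ne <| by rintro rfl; exact h.2 p.getVert_length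
  obtain ⟨x, y, hxy, hpair⟩ :=
    Set.ncard_eq_two.1 (hp.ncard_neighborSet_toSubgraph_internal_eq_two hi0 hil)
  have hsub := p.toSubgraph.neighborSet_subset (p.getVert i)
  exact hxy (hN (hsub (hpair ▸ by simp)) (hsub (hpair ▸ by simp)))

variable [DecidableEq V]

theorem IsHamiltonian.reverse {u w : V} {p : G.Walk u w} (hp : p.IsHamiltonian) :
    p.reverse.IsHamiltonian := fun x => by
  rw [support_reverse, List.count_reverse]
  exact hp x

theorem IsHamiltonianCycle.exists_isPath_of_neighborSet_eq_pair {v a b : V}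
    (hN : G.neighborSet v = {a, b}) {c : G.Walk v v} (hc : c.IsHamiltonianCycle) :
    ∃ q : G.Walk a b, q.IsPath ∧ ∀ x, x ∈ q.support ↔ x ≠ v := by
  cases c with
  | nil => exact absurd rfl hc.ne_nil
  | @cons _ x _ hvx p =>
  have hp : ¬ p.Nil := not_nil_of_ne (G.ne_of_adj hvx).symm
  have hpath : p.IsPath := ((cons_isCycle_iff p hvx).1 hc.isCycle).1
  have hsupp : p.support = p.dropLast.support ++ [v] := (support_dropLast_concat hp).symm
  have hnd := hpath.support_nodup
  rw [hsupp, List.nodup_append] at hnd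
  have hq : ∀ y, y ∈ p.dropLast.support ↔ y ≠ v := by
    intro y
    have hy := hc.mem_support y
    rw [support_cons, hsupp] at hy
    constructor
    · rintro hy' rfl
      exact hnd.2.2 _ hy' _ (List.mem_singleton_self _) rfl
    · intro hyv
      simpa [hyv] using hy
  have hx : x ∈ ({a, b} : Set V) := hN ▸ hvx
  have hy : p.penultimate ∈ ({a, b} : Set V) := hN ▸ (p.adj_penultimate hp).symm
  have hxy : x ≠ p.penultimate := by
    simpa [penultimate_cons_of_not_nil _ _ hp] using hc.isCycle.snd_ne_penultimate
  simp only [Set.mem_insert_iff, Set.mem_singleton_iff] at hx hy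
  rcases hx with rfl | rfl <;> rcases hy with h | h
  · exact absurd h hxy.symm
  · exact ⟨p.dropLast.copy rfl h, by rw [isPath_copy]; exact hpath.dropLast,
      by simpa only [support_copy] using hq⟩
  · refine ⟨(p.dropLast.copy rfl h).reverse,
      by rw [isPath_reverse_iff, isPath_copy]; exact hpath.dropLast, fun y => ?_⟩
    rw [support_reverse, List.mem_reverse, support_copy]
    exact hq y
  · exact absurd h hxy.symm

end SimpleGraph.Walk

section splitVertex

open Walk

variable {V : Type*} {G : SimpleGraph V} {v a b : V}

@[simp]
theorem splitVertex_adj_inl_inl {p q : {x : V // x ≠ v}} :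
    (splitVertex G v a b).Adj (.inl p) (.inl q) ↔ G.Adj p q := by
  simp only [splitVertex, fromRel_adj, ne_eq, Sum.inl.injEq]
  exact ⟨fun h => h.2.elim id (·.symm),
    fun h => ⟨fun hpq => G.ne_of_adj h (hpq ▸ rfl), .inl h⟩⟩

@[simp]
theorem splitVertex_adj_inl_inr {p : {x : V // x ≠ v}} {i : Bool} :
    (splitVertex G v a b).Adj (.inl p) (.inr i) ↔
      i = false ∧ p.val = a ∨ i = true ∧ p.val = b := by
  simp [splitVertex]

@[simp]
theorem splitVertex_adj_inr_inl {p : {x : V // x ≠ v}} {i : Bool} :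
    (splitVertex G v a b).Adj (.inr i) (.inl p) ↔
      i = false ∧ p.val = a ∨ i = true ∧ p.val = b :=
  (splitVertex G v a b).adj_comm _ _ |>.trans splitVertex_adj_inl_inr

@[simp]
theorem splitVertex_not_adj_inr_inr {i j : Bool} :
    ¬ (splitVertex G v a b).Adj (.inr i) (.inr j) := by
  simp [splitVertex]

theorem splitVertex_neighborSet_inr_subsingleton (i : Bool) :
    ((splitVertex G v a b).neighborSet (.inr i)).Subsingleton := by
  rintro (p | j) hp (q | k) hq <;> simp at hp hq
  cases i <;> simp_all [Subtype.ext_iff]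

def splitVertexIncl : G.induce {x | x ≠ v} →g splitVertex G v a b where
  toFun := Sum.inl
  map_rel' h := splitVertex_adj_inl_inl.2 h

def splitVertexProj (hva : G.Adj v a) (hvb : G.Adj v b) : splitVertex G v a b →g G where
  toFun := Sum.elim Subtype.val fun _ => v
  map_rel' := by
    rintro (p | i) (q | j) h <;> simp at h
    · exact h
    · rcases h with ⟨rfl, h⟩ | ⟨rfl, h⟩ <;> simp [h, hva.symm, hvb.symm]
    · rcases h with ⟨rfl, h⟩ | ⟨rfl, h⟩ <;> simp [h, hva, hvb]

variable (hva : G.Adj v a) (hvb : G.Adj v b)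

@[simp]
theorem splitVertexProj_inl (p : {x : V // x ≠ v}) : splitVertexProj hva hvb (.inl p) = p := rfl

@[simp]
theorem splitVertexProj_inr (i : Bool) : splitVertexProj hva hvb (.inr i) = v := rfl

theorem splitVertexProj_injOn : Set.InjOn (splitVertexProj hva hvb) {.inr false}ᶜ := by
  rintro (p | (_ | _)) hz (q | (_ | _)) hz' h <;> simp_all [Subtype.ext_iff]
  exacts [p.2 h, q.2 h.symm]

theorem sym2Map_splitVertexProj_injOn (hab : a ≠ b) :
    Set.InjOn (Sym2.map (splitVertexProj hva hvb)) (splitVertex G v a b).edgeSet := by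
  rintro ⟨x, y⟩ hxy ⟨x', y'⟩ hxy' h
  rcases x with p | i <;> rcases y with q | j <;> rcases x' with p' | i' <;>
    rcases y' with q' | j' <;> simp_all [Subtype.ext_iff] <;> grind

theorem SimpleGraph.Walk.IsHamiltonian.isHamiltonianCycle_map_splitVertexProj
    [DecidableEq V] [DecidableEq ({x : V // x ≠ v} ⊕ Bool)] (hab : a ≠ b)
    {w : (splitVertex G v a b).Walk (.inr false) (.inr true)} (hw : w.IsHamiltonian) :
    ((w.map (splitVertexProj hva hvb)).copy (splitVertexProj_inr ..)
      (splitVertexProj_inr ..)).IsHamiltonianCycle := by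
  set π := splitVertexProj hva hvb
  set c := (w.map π).copy (splitVertexProj_inr ..) (splitVertexProj_inr ..)
  have hsupp : c.support.tail = w.support.tail.map π := by
    rw [support_copy, Walk.support_map, List.map_tail]
  have hF : .inr false ∉ w.support.tail := by
    have := hw.isPath.support_nodup
    rw [← cons_tail_support, List.nodup_cons] at this
    exact this.1
  have hnd : c.support.tail.Nodup := by
    rw [hsupp]
    exact hw.isPath.support_nodup.tail.map_on fun x hx y hy =>
      splitVertexProj_injOn hva hvb (ne_of_mem_of_not_mem hx hF) (ne_of_mem_of_not_mem hy hF)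
  rw [isHamiltonianCycle_iff_isCycle_and_support_count_tail_eq_one, isCycle_def]
  refine ⟨⟨⟨?_⟩, ?_, hnd⟩, fun x => List.count_eq_one_of_mem hnd ?_⟩
  · rw [edges_copy, edges_map]
    exact hw.isPath.isTrail.edges_nodup.map_on fun e he e' he' =>
      sym2Map_splitVertexProj_injOn hva hvb hab (w.edges_subset_edgeSet he)
        (w.edges_subset_edgeSet he')
  · intro h
    have hlen := congrArg length h
    rw [length_copy, length_map, length_nil] at hlen
    exact absurd (eq_of_length_eq_zero hlen) (by simp)
  · rw [hsupp, List.mem_map]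
    by_cases hx : x = v
    · exact ⟨.inr true, end_mem_tail_support_of_ne (by simp) w, hx.symm⟩
    · refine ⟨.inl ⟨x, hx⟩, ?_, rfl⟩
      exact (List.mem_cons.1 (cons_tail_support w ▸ hw.mem_support _)).resolve_left (by simp)

theorem sym2Map_splitVertexProj_mem_hamCycleSets (hab : a ≠ b)
    {S : Set (Sym2 ({x : V // x ≠ v} ⊕ Bool))} (hS : S ∈ hamPathSets (splitVertex G v a b)) :
    Sym2.map (splitVertexProj hva hvb) '' S ∈ hamCycleSets G := by
  let := Classical.decEq V
  let := Classical.decEq ({x : V // x ≠ v} ⊕ Bool)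
  obtain ⟨u₁, u₂, w, hw, rfl⟩ := hS
  have hend (i : Bool) : .inr i = u₁ ∨ .inr i = u₂ :=
    hw.isPath.eq_or_eq_of_subsingleton_neighborSet (hw.mem_support _)
      (splitVertex_neighborSet_inr_subsingleton i)
  wlog hu₁ : u₁ = .inr false generalizing u₁ u₂ w
  · have hu₂ : u₂ = .inr false := ((hend false).resolve_left (Ne.symm hu₁)).symm
    simpa [edges_reverse] using this _ _ w.reverse hw.reverse (fun i => (hend i).symm) hu₂
  subst hu₁
  obtain rfl : u₂ = .inr true := ((hend true).resolve_left (by simp)).symm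
  refine ⟨v, _, hw.isHamiltonianCycle_map_splitVertexProj hva hvb hab, ?_⟩
  ext
  rw [Set.mem_ofPred_eq, edges_copy, edges_map]
  simp

theorem hamPathSets_splitVertex_subsingleton (hva : G.Adj v a) (hvb : G.Adj v b) (hab : a ≠ b)
    (h : (hamCycleSets G).Subsingleton) : (hamPathSets (splitVertex G v a b)).Subsingleton := by
  have hsub {S} (hS : S ∈ hamPathSets (splitVertex G v a b)) :
      S ⊆ (splitVertex G v a b).edgeSet := by
    obtain ⟨_, _, w, -, rfl⟩ := hS
    exact fun e he => w.edges_subset_edgeSet he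
  intro S hS S' hS'
  refine ((sym2Map_splitVertexProj_injOn hva hvb hab).image_eq_image_iff (hsub hS)
    (hsub hS')).1 ?_
  exact h (sym2Map_splitVertexProj_mem_hamCycleSets hva hvb hab hS)
    (sym2Map_splitVertexProj_mem_hamCycleSets hva hvb hab hS')

theorem SimpleGraph.Walk.IsPath.exists_isHamiltonian_splitVertex
    [DecidableEq ({x : V // x ≠ v} ⊕ Bool)] {q : G.Walk a b} (hq : q.IsPath)
    (hsupp : ∀ x, x ∈ q.support ↔ x ≠ v) :
    ∃ w : (splitVertex G v a b).Walk (.inr false) (.inr true), w.IsHamiltonian := by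
  let qv := q.induce {x | x ≠ v} fun x hx => (hsupp x).1 hx
  have hqv : qv.IsPath := IsPath.of_map (f := (Embedding.induce _).toHom) (by rwa [map_induce])
  let q' := qv.map (splitVertexIncl (a := a) (b := b))
  have hq' : q'.IsPath := hqv.map Sum.inl_injective
  have hstart : (splitVertex G v a b).Adj (.inr false)
      (.inl ⟨a, (hsupp a).1 q.start_mem_support⟩) := by simp
  have hend : (splitVertex G v a b).Adj (.inl ⟨b, (hsupp b).1 q.end_mem_support⟩)
      (.inr true) := by simp
  refine ⟨cons hstart (q'.concat hend), IsPath.isHamiltonian_of_mem ?_ ?_⟩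
  · refine (hq'.concat ?_ hend).cons ?_ <;> simp [q', splitVertexIncl]
  · rintro (p | (_ | _)) <;> simp [q', qv, splitVertexIncl, hsupp]
    exact ⟨p, p.2, rfl⟩

theorem hamPathSets_splitVertex_nonempty (hN : G.neighborSet v = {a, b})
    (h : (hamCycleSets G).Nonempty) : (hamPathSets (splitVertex G v a b)).Nonempty := by
  let := Classical.decEq V
  let := Classical.decEq ({x : V // x ≠ v} ⊕ Bool)
  obtain ⟨_, u, c, hc, rfl⟩ := h
  obtain ⟨q, hq, hsupp⟩ :=
    (hc.rotate (hc.mem_support v)).exists_isPath_of_neighborSet_eq_pair hN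
  obtain ⟨w, hw⟩ := hq.exists_isHamiltonian_splitVertex hsupp
  exact ⟨_, _, _, w, hw, rfl⟩

end splitVertex

theorem stmt14_general {V : Type*} (G : SimpleGraph V)
    (huh : hamCount G = 1) {v a b : V} (hva : G.Adj v a) (hvb : G.Adj v b)
    (hab : a ≠ b) (hdeg : vdeg G v = 2) :
    hamPathCount (splitVertex G v a b) = 1 := by
  obtain ⟨s₀, hs₀⟩ := Set.ncard_eq_one.1 huh
  have hN : G.neighborSet v = {a, b} := by
    rw [vdeg] at hdeg
    refine (Set.eq_of_subset_of_ncard_le ?_ ?_ (Set.finite_of_ncard_pos (by omega))).symm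
    · rintro _ (rfl | rfl) <;> assumption
    · rw [hdeg, Set.ncard_pair hab]
  obtain ⟨S, hS⟩ := hamPathSets_splitVertex_nonempty hN (hs₀ ▸ Set.singleton_nonempty s₀)
  have hsub :=
    hamPathSets_splitVertex_subsingleton hva hvb hab (hs₀ ▸ Set.subsingleton_singleton)
  exact Set.ncard_eq_one.2 ⟨S, hsub.eq_singleton_of_mem hS⟩

theorem stmt14 {V : Type*} [Fintype V] (G : SimpleGraph V)
    (huh : hamCount G = 1) {v a b : V} (hva : G.Adj v a) (hvb : G.Adj v b)
    (hab : a ≠ b) (hdeg : vdeg G v = 2) :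
    hamPathCount (splitVertex G v a b) = 1 :=
  stmt14_general G huh hva hvb hab hdeg
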